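/- For the binary CV PR box with components μ_{x,y} = (1/2)[δ_{(ℓ,(-1)^{xy}ℓ)} + δ_{(-ℓ,-(-1)^{xy}ℓ)}], the CFRD expression [⟨A₀B₀⟩ − ⟨A₁B₁⟩]² + [⟨A₀B₁⟩ + ⟨A₁B₀⟩]² − Σ_{x,y}⟨A_x²B_y²⟩ equals 4ℓ⁴; in particular, for ℓ ≠ 0 this box violates the CFRD inequality. -/

import Mathlib

open MeasureTheory
open scoped ENNReal

/-- The binary CV PR box `μ_{x,y} = (1/2)[δ_{(ℓ,(-1)^{xy}ℓ)} + δ_{(-ℓ,-(-1)^{xy}ℓ)}]`. -/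
noncomputable def prBox2 (ℓ : ℝ) (x y : Fin 2) : Measure (ℝ × ℝ) :=
  (1 / 2 : ℝ≥0∞) • Measure.dirac (ℓ, (-1 : ℝ) ^ ((x : ℕ) * (y : ℕ)) * ℓ) +
  (1 / 2 : ℝ≥0∞) • Measure.dirac (-ℓ, -((-1 : ℝ) ^ ((x : ℕ) * (y : ℕ)) * ℓ))

/-- The cross-moment `⟨A_x B_y⟩`. -/
noncomputable def E (ℓ : ℝ) (x y : Fin 2) : ℝ :=
  ∫ p : ℝ × ℝ, p.1 * p.2 ∂(prBox2 ℓ x y)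

/-- The second-moment `⟨A_x² B_y²⟩`. -/
noncomputable def S (ℓ : ℝ) (x y : Fin 2) : ℝ :=
  ∫ p : ℝ × ℝ, p.1 ^ 2 * p.2 ^ 2 ∂(prBox2 ℓ x y)

theorem integral_smul_dirac_add_smul_dirac {α : Type*} [MeasurableSpace α]
    [MeasurableSingletonClass α] (f : α → ℝ) (p q : α) {a b : ℝ≥0∞} (ha : a ≠ ∞) (hb : b ≠ ∞) :
    ∫ z, f z ∂(a • Measure.dirac p + b • Measure.dirac q) = a.toReal * f p + b.toReal * f q := by
  have hp : Integrable f (Measure.dirac p) := integrable_dirac (by simp)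
  have hq : Integrable f (Measure.dirac q) := integrable_dirac (by simp)
  rw [integral_add_measure (hp.smul_measure ha) (hq.smul_measure hb), integral_smul_measure,
    integral_smul_measure, integral_dirac, integral_dirac, smul_eq_mul, smul_eq_mul]

theorem integral_prBox2 (f : ℝ × ℝ → ℝ) (ℓ : ℝ) (x y : Fin 2) :
    ∫ z, f z ∂(prBox2 ℓ x y) = (f (ℓ, (-1) ^ ((x : ℕ) * (y : ℕ)) * ℓ)
      + f (-ℓ, -((-1) ^ ((x : ℕ) * (y : ℕ)) * ℓ))) / 2 := by
  rw [prBox2, integral_smul_dirac_add_smul_dirac _ _ _ (by simp) (by simp)]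
  norm_num
  ring

theorem E_eq (ℓ : ℝ) (x y : Fin 2) : E ℓ x y = (-1) ^ ((x : ℕ) * (y : ℕ)) * ℓ ^ 2 := by
  rw [E, integral_prBox2]
  ring

theorem S_eq (ℓ : ℝ) (x y : Fin 2) : S ℓ x y = ℓ ^ 4 := by
  have hsq : ((-1 : ℝ) ^ ((x : ℕ) * (y : ℕ))) ^ 2 = 1 := by
    rw [← pow_mul, mul_comm, pow_mul, neg_one_sq, one_pow]
  rw [S, integral_prBox2]
  linear_combination ℓ ^ 4 * hsq

theorem stmt3 (ℓ : ℝ) :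
    (E ℓ 0 0 - E ℓ 1 1) ^ 2 + (E ℓ 0 1 + E ℓ 1 0) ^ 2
        - (S ℓ 0 0 + S ℓ 0 1 + S ℓ 1 0 + S ℓ 1 1) = 4 * ℓ ^ 4 ∧
    (ℓ ≠ 0 →
      S ℓ 0 0 + S ℓ 0 1 + S ℓ 1 0 + S ℓ 1 1
        < (E ℓ 0 0 - E ℓ 1 1) ^ 2 + (E ℓ 0 1 + E ℓ 1 0) ^ 2) := by
  have hgap : (E ℓ 0 0 - E ℓ 1 1) ^ 2 + (E ℓ 0 1 + E ℓ 1 0) ^ 2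
      - (S ℓ 0 0 + S ℓ 0 1 + S ℓ 1 0 + S ℓ 1 1) = 4 * ℓ ^ 4 := by
    simp only [E_eq, S_eq]
    norm_num
    ring
  refine ⟨hgap, fun hℓ => ?_⟩
  have : 0 < ℓ ^ 4 := by positivity
  linarith
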